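/- arXiv:1707.06880 — 5 statements merged into one kernel-verified Lean document; each statement's English description precedes it below -/
import Mathlib

section
/- Let (X,B,η) be a finite, complete, separable, non-atomic measure space, let U_ad = {u ∈ L^∞(X) : α ≤ u ≤ β a.e.} with α < β, and let J : U_ad → ℝ be weak* sequentially continuous from L^∞(X) to ℝ. Suppose ū ∈ U_ad is a local minimizer of J with respect to the L^1(X) norm and ū is not bang-bang, i.e., the set {x : α < ū(x) < β} has positive measure. Then there exists δ₀ > 0 such that for every δ ∈ (0, δ₀] and every ε > 0 there exists u ∈ U_ad with ‖u − ū‖_{L^1(X)} = δ and J(u) ≤ J(ū) + ε. -/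
/-!
Take a set `A` of positive measure on which `ubar` stays at distance `c > 0` from both bounds,
and perturb `ubar` by `γ σₖ`, where `σₖ = ±1` on `A` and `0` off `A`; every such control is
admissible for `γ ≤ c` and lies at `L¹`-distance `γ μ(A)` from `ubar`. The signs are chosen so
that `σₖ → 0` weakly-* in `L^∞`, whence `J(ubar + γ σₖ) → J(ubar)`. To build `σₖ`, let the sets
`Sₙ` be measure-dense and bisect (Sierpiński) each cell of the partition of `A` generated by
`S₀, …, S_{k-1}`, putting `σₖ = 1` on one half and `-1` on the other. Then `∫_{Sₙ} σₖ = 0` as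
soon as `k > n`; by density this gives `∫_E σₖ → 0` for every measurable `E`, and since the
`σₖ` are uniformly bounded, `∫ σₖ w → 0` for every integrable `w`.
-/

open MeasureTheory Filter Topology
open scoped ENNReal

/-- The admissible set `U_ad = {u ∈ L^∞(X) : α ≤ u ≤ β a.e.}`. -/
def Uad {X : Type*} [MeasurableSpace X] (μ : Measure X) (α β : ℝ) : Set (X → ℝ) :=
  {u | Measurable u ∧ ∀ᵐ x ∂μ, α ≤ u x ∧ u x ≤ β}

open Set Function

namespace MeasureTheory

variable {X : Type*} [MeasurableSpace X] {μ : Measure X}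

-- Not Mathlib's `NoAtoms`, which only asks singletons to be null.
def Measure.IsNonatomic (μ : Measure X) : Prop :=
  ∀ A : Set X, MeasurableSet A → 0 < μ A → ∃ C, C ⊆ A ∧ MeasurableSet C ∧ 0 < μ C ∧ μ C < μ A

namespace Measure.IsNonatomic

theorem exists_subset_two_mul_le (hμ : μ.IsNonatomic) {A : Set X} (hA : MeasurableSet A)
    (hA0 : 0 < μ A) : ∃ C ⊆ A, MeasurableSet C ∧ 0 < μ C ∧ 2 * μ C ≤ μ A := by
  obtain ⟨D, hDA, hD, hD0, hDA'⟩ := hμ A hA hA0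
  have hsplit : μ (A ∩ D) + μ (A \ D) = μ A := measure_inter_add_sdiff A hD
  rw [inter_eq_right.2 hDA] at hsplit
  have hAD0 : 0 < μ (A \ D) := by
    by_contra! h
    rw [nonpos_iff_eq_zero.1 h, add_zero] at hsplit
    exact hDA'.ne hsplit
  rcases le_total (μ D) (μ (A \ D)) with h | h
  · exact ⟨D, hDA, hD, hD0, by rw [two_mul, ← hsplit]; gcongr⟩
  · exact ⟨A \ D, sdiff_subset, hA.diff hD, hAD0, by rw [two_mul, ← hsplit]; gcongr⟩

theorem exists_subset_two_pow_mul_le (hμ : μ.IsNonatomic) {A : Set X} (hA : MeasurableSet A)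
    (hA0 : 0 < μ A) (n : ℕ) : ∃ C ⊆ A, MeasurableSet C ∧ 0 < μ C ∧ 2 ^ n * μ C ≤ μ A := by
  induction n with
  | zero => exact ⟨A, subset_rfl, hA, hA0, by simp⟩
  | succ n ih =>
    obtain ⟨C, hCA, hC, hC0, hCA'⟩ := ih
    obtain ⟨D, hDC, hD, hD0, hDC'⟩ := hμ.exists_subset_two_mul_le hC hC0
    refine ⟨D, hDC.trans hCA, hD, hD0, ?_⟩
    calc 2 ^ (n + 1) * μ D = 2 ^ n * (2 * μ D) := by ring
      _ ≤ 2 ^ n * μ C := by gcongr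
      _ ≤ μ A := hCA'

theorem exists_subset_measure_pos_lt [IsFiniteMeasure μ] (hμ : μ.IsNonatomic) {A : Set X}
    (hA : MeasurableSet A) (hA0 : 0 < μ A) {ε : ℝ≥0∞} (hε : 0 < ε) :
    ∃ C ⊆ A, MeasurableSet C ∧ 0 < μ C ∧ μ C < ε := by
  obtain ⟨n, hn⟩ := ENNReal.exists_nat_mul_gt hε.ne' (measure_ne_top μ A)
  obtain ⟨C, hCA, hC, hC0, hCA'⟩ := hμ.exists_subset_two_pow_mul_le hA hA0 n
  refine ⟨C, hCA, hC, hC0, (ENNReal.mul_lt_mul_iff_right (a := 2 ^ n) (by simp) (by simp)).1 ?_⟩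
  calc 2 ^ n * μ C ≤ μ A := hCA'
    _ < n * ε := hn
    _ ≤ 2 ^ n * ε := by gcongr; exact_mod_cast Nat.lt_two_pow_self.le

end Measure.IsNonatomic

theorem exists_half_maximal_subset_measure_le [IsFiniteMeasure μ] (U : Set X) (r : ℝ≥0∞) :
    ∃ D ⊆ U, MeasurableSet D ∧ μ D ≤ r ∧
      ∀ D' ⊆ U, MeasurableSet D' → μ D' ≤ r → μ D' ≤ 2 * μ D := by
  set s := sSup (μ '' {D | D ⊆ U ∧ MeasurableSet D ∧ μ D ≤ r})
  have hle_s : ∀ D' ⊆ U, MeasurableSet D' → μ D' ≤ r → μ D' ≤ s :=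
    fun D' hD'U hD' hD'r => le_sSup (mem_image_of_mem μ ⟨hD'U, hD', hD'r⟩)
  rcases eq_or_ne s 0 with hs | hs
  · refine ⟨∅, empty_subset U, .empty, by simp, fun D' hD'U hD' hD'r => ?_⟩
    simpa [hs] using hle_s D' hD'U hD' hD'r
  have hs_top : s ≠ ∞ := ne_top_of_le_ne_top (measure_ne_top μ univ)
    (sSup_le (by rintro _ ⟨D, -, rfl⟩; exact measure_mono (subset_univ D)))
  obtain ⟨_, ⟨D, ⟨hDU, hD, hDr⟩, rfl⟩, hDs⟩ := lt_sSup_iff.1 (ENNReal.half_lt_self hs hs_top)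
  refine ⟨D, hDU, hD, hDr, fun D' hD'U hD' hD'r => (hle_s D' hD'U hD' hD'r).trans ?_⟩
  calc s = 2 * (s / 2) := (ENNReal.mul_div_cancel' (by simp) (by simp)).symm
    _ ≤ 2 * μ D := by gcongr

theorem Measure.IsNonatomic.exists_subset_measure_eq [IsFiniteMeasure μ] (hμ : μ.IsNonatomic)
    {T : Set X} (hT : MeasurableSet T) {v : ℝ≥0∞} (hv : v ≤ μ T) :
    ∃ B ⊆ T, MeasurableSet B ∧ μ B = v := by
  choose D hDU hDm hDr hDmax using exists_half_maximal_subset_measure_le (μ := μ)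
  -- greedily add a subset of `T \ F k` that fills at least half of what can still be added
  let F : ℕ → Set X := fun k => Nat.rec ∅ (fun _ B => B ∪ D (T \ B) (v - μ B)) k
  set E : ℕ → Set X := fun k => D (T \ F k) (v - μ (F k))
  have hF (k : ℕ) : F k ⊆ T ∧ MeasurableSet (F k) ∧ μ (F k) ≤ v := by
    induction k with
    | zero => exact ⟨empty_subset T, .empty, by simp [F]⟩
    | succ k ih =>
      obtain ⟨hFT, hFm, hFv⟩ := ih
      refine ⟨union_subset hFT ((hDU _ _).trans sdiff_subset), hFm.union (hDm _ _), ?_⟩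
      calc μ (F k ∪ E k) ≤ μ (F k) + μ (E k) := measure_union_le _ _
        _ ≤ μ (F k) + (v - μ (F k)) := by gcongr; exact hDr _ _
        _ = v := add_tsub_cancel_of_le hFv
  have hF_mono : Monotone F := monotone_nat_of_le_succ fun k => subset_union_left
  have hE_disj : Pairwise (Disjoint on E) := (pairwise_disjoint_on E).2 fun j k hjk =>
    disjoint_of_subset (subset_union_right.trans (hF_mono hjk)) (hDU _ _)
      disjoint_sdiff_right
  have hE_tendsto : Tendsto (fun k => μ (E k)) atTop (𝓝 0) := by
    refine ENNReal.tendsto_atTop_zero_of_tsum_ne_top ?_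
    rw [← measure_iUnion hE_disj fun k => hDm _ _]
    exact measure_ne_top μ _
  set B := ⋃ k, F k
  have hBT : B ⊆ T := iUnion_subset fun k => (hF k).1
  have hB : MeasurableSet B := .iUnion fun k => (hF k).2.1
  have hBv : μ B ≤ v := by
    rw [hF_mono.measure_iUnion]
    exact iSup_le fun k => (hF k).2.2
  refine ⟨B, hBT, hB, hBv.antisymm (not_lt.1 fun hBv' => ?_)⟩
  -- a small positive piece `C` of `T \ B` was a candidate at every step, so the disjoint
  -- increments `E k` cannot shrink to `0`
  have hTB : 0 < μ (T \ B) := (tsub_pos_of_lt (hBv'.trans_le hv)).trans_le le_measure_sdiff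
  obtain ⟨C, hCTB, hC, hC0, hCv⟩ :=
    hμ.exists_subset_measure_pos_lt (hT.diff hB) hTB (tsub_pos_of_lt hBv')
  have hCE (k : ℕ) : μ C ≤ 2 * μ (E k) := by
    refine hDmax _ _ C (fun x hx => ⟨(hCTB hx).1, fun hxF => (hCTB hx).2 ?_⟩) hC ?_
    · exact mem_iUnion.2 ⟨k, hxF⟩
    · exact hCv.le.trans (tsub_le_tsub_left (measure_mono (subset_iUnion F k)) v)
  have h2E : Tendsto (fun k => 2 * μ (E k)) atTop (𝓝 0) := by
    simpa using ENNReal.Tendsto.const_mul hE_tendsto (Or.inr ENNReal.ofNat_ne_top)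
  exact hC0.ne' (nonpos_iff_eq_zero.1 (ge_of_tendsto' h2E hCE))

theorem measure_union_inter {G₁ G₂ W : Set X} (hG : Disjoint G₁ G₂) (hG₂ : MeasurableSet G₂)
    (hW : MeasurableSet W) : μ ((G₁ ∪ G₂) ∩ W) = μ (G₁ ∩ W) + μ (G₂ ∩ W) := by
  rw [union_inter_distrib_right,
    measure_union (hG.mono inter_subset_left inter_subset_left) (hG₂.inter hW)]

theorem Measure.IsNonatomic.exists_bisecting_subset [IsFiniteMeasure μ] (hμ : μ.IsNonatomic)
    (k : ℕ) {S : ℕ → Set X} (hS : ∀ n, MeasurableSet (S n)) {A : Set X} (hA : MeasurableSet A) :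
    ∃ G ⊆ A, MeasurableSet G ∧ 2 * μ G = μ A ∧ ∀ i < k, 2 * μ (G ∩ S i) = μ (A ∩ S i) := by
  induction k generalizing S A with
  | zero =>
    obtain ⟨G, hGA, hG, hμG⟩ := hμ.exists_subset_measure_eq hA ENNReal.half_le_self
    exact ⟨G, hGA, hG, by rw [hμG, ENNReal.mul_div_cancel' (by simp) (by simp)], by simp⟩
  | succ k ih =>
    -- bisect `A ∩ S 0` and `A \ S 0` separately along the shifted sequence
    obtain ⟨G₁, hG₁A, hG₁, hμG₁, hG₁S⟩ := ih (fun n => hS (n + 1)) (hA.inter (hS 0))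
    obtain ⟨G₂, hG₂A, hG₂, hμG₂, hG₂S⟩ := ih (fun n => hS (n + 1)) (hA.diff (hS 0))
    have hG₁S₀ : G₁ ⊆ S 0 := hG₁A.trans inter_subset_right
    have hG₂S₀ : Disjoint G₂ (S 0) := disjoint_of_subset_left hG₂A disjoint_sdiff_left
    have hA_split : Disjoint (A ∩ S 0) (A \ S 0) := disjoint_sdiff_inter.symm
    have hA_W {W : Set X} (hW : MeasurableSet W) :
        μ (A ∩ W) = μ (A ∩ S 0 ∩ W) + μ (A \ S 0 ∩ W) := by
      rw [← measure_union_inter hA_split (hA.diff (hS 0)) hW, inter_union_sdiff]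
    have hG_W {W : Set X} (hW : MeasurableSet W) :
        2 * μ ((G₁ ∪ G₂) ∩ W) = 2 * μ (G₁ ∩ W) + 2 * μ (G₂ ∩ W) := by
      rw [measure_union_inter (disjoint_of_subset_left hG₁S₀ hG₂S₀.symm) hG₂ hW, mul_add]
    refine ⟨G₁ ∪ G₂, union_subset (hG₁A.trans inter_subset_left) (hG₂A.trans sdiff_subset),
      hG₁.union hG₂, ?_, fun i hi => ?_⟩
    · have h := hG_W .univ
      simp only [inter_univ, hμG₁, hμG₂] at h
      rwa [← measure_union hA_split (hA.diff (hS 0)), inter_union_sdiff] at h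
    rcases i with _ | j
    · rw [hG_W (hS 0), inter_eq_left.2 hG₁S₀, hG₂S₀.inter_eq, hμG₁]
      simp
    · rw [hG_W (hS (j + 1)), hG₁S j (by omega), hG₂S j (by omega), hA_W (hS (j + 1))]

theorem integral_mul_indicator_const (g : X → ℝ) {s : Set X} (hs : MeasurableSet s) (c : ℝ) :
    ∫ x, g x * s.indicator (fun _ => c) x ∂μ = (∫ x in s, g x ∂μ) * c := by
  simp_rw [← indicator_mul_right, integral_indicator hs, integral_mul_const]

theorem dist_integral_mul_le {g : X → ℝ} {C : ℝ} (hg : AEStronglyMeasurable g μ)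
    (hC : ∀ x, ‖g x‖ ≤ C) (φ ψ : X →₁[μ] ℝ) :
    dist (∫ x, g x * φ x ∂μ) (∫ x, g x * ψ x ∂μ) ≤ C * dist φ ψ := by
  have hint (φ : X →₁[μ] ℝ) : Integrable (fun x => g x * φ x) μ :=
    (L1.integrable_coeFn φ).bdd_mul hg (ae_of_all _ hC)
  calc dist (∫ x, g x * φ x ∂μ) (∫ x, g x * ψ x ∂μ) = ‖∫ x, g x * (φ - ψ) x ∂μ‖ := by
        rw [dist_eq_norm, ← integral_sub (hint φ) (hint ψ)]
        congr 1
        refine integral_congr_ae ?_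
        filter_upwards [Lp.coeFn_sub φ ψ] with x hx
        rw [hx, Pi.sub_apply, mul_sub]
    _ ≤ ∫ x, C * ‖(φ - ψ) x‖ ∂μ := by
        refine norm_integral_le_of_norm_le ((L1.integrable_coeFn _).norm.const_mul C)
          (ae_of_all _ fun x => ?_)
        rw [norm_mul]
        exact mul_le_mul_of_nonneg_right (hC x) (norm_nonneg _)
    _ = C * dist φ ψ := by rw [integral_const_mul, dist_eq_norm, L1.norm_eq_integral_norm]

theorem isClosed_setOf_tendsto_integral_mul {g : ℕ → X → ℝ} {C : ℝ}
    (hg : ∀ k, AEStronglyMeasurable (g k) μ) (hC : ∀ k x, ‖g k x‖ ≤ C) :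
    IsClosed {φ : X →₁[μ] ℝ | Tendsto (fun k => ∫ x, g k x * φ x ∂μ) atTop (𝓝 0)} := by
  have hmod : Tendsto (fun t : ℝ => C * t) (𝓝 0) (𝓝 0) := by
    simpa using (continuous_const_mul C).tendsto 0
  exact (Metric.uniformEquicontinuous_of_continuity_modulus _ hmod
    (fun k (φ : X →₁[μ] ℝ) => ∫ x, g k x * φ x ∂μ)
    fun φ ψ k => dist_integral_mul_le (hg k) (hC k) φ ψ).equicontinuous.isClosed_setOfPred_tendsto
    continuous_const

theorem tendsto_integral_mul_of_measureDense {g : ℕ → X → ℝ} {C : ℝ} {𝒜 : Set (Set X)}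
    (hg : ∀ k, AEStronglyMeasurable (g k) μ) (hC : ∀ k x, ‖g k x‖ ≤ C)
    (h𝒜 : μ.MeasureDense 𝒜) (hg𝒜 : ∀ t ∈ 𝒜, Tendsto (fun k => ∫ x in t, g k x ∂μ) atTop (𝓝 0))
    {w : X → ℝ} (hw : Integrable w μ) :
    Tendsto (fun k => ∫ x, g k x * w x ∂μ) atTop (𝓝 0) := by
  have hclosed := isClosed_setOf_tendsto_integral_mul hg hC
  have hint {f : X → ℝ} (hf : Integrable f μ) (k : ℕ) : Integrable (fun x => g k x * f x) μ :=
    hf.bdd_mul (hg k) (ae_of_all _ (hC k))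
  have hindicator {s : Set X} (hs : MeasurableSet s) (hμs : μ s ≠ ∞) (c : ℝ) (k : ℕ) :
      ∫ x, g k x * indicatorConstLp 1 hs hμs c x ∂μ = (∫ x in s, g k x ∂μ) * c := by
    rw [← integral_mul_indicator_const (g k) hs c]
    exact integral_congr_ae (EventuallyEq.rfl.mul indicatorConstLp_coeFn)
  refine Integrable.induction _ (fun c s hs hμs => ?_) (fun f f' _ hf hf' hPf hPf' => ?_) hclosed
    (fun f f' hff' _ hPf => ?_) hw
  · have : Fact ((1 : ℝ≥0∞) ≠ ∞) := ⟨ENNReal.one_ne_top⟩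
    have hmem :
        Tendsto (fun k => ∫ x, g k x * indicatorConstLp 1 hs hμs.ne c x ∂μ) atTop (𝓝 0) := by
      refine closure_minimal ?_ hclosed
        (h𝒜.indicatorConstLp_subset_closure 1 c ⟨s, hs, hμs.ne, rfl⟩)
      rintro _ ⟨t, ht, hμt, rfl⟩
      simpa [hindicator] using (hg𝒜 t ht).mul_const c
    simpa only [integral_mul_indicator_const _ hs, ← hindicator hs hμs.ne] using hmem
  · simpa [mul_add, integral_add (hint hf _) (hint hf' _)] using hPf.add hPf'
  · exact hPf.congr fun k => integral_congr_ae (hff'.mono fun x hx => by rw [hx])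

omit [MeasurableSpace X] in
theorem norm_le_one_of_abs_eq_indicator {f : X → ℝ} {A : Set X}
    (hf : ∀ x, |f x| = A.indicator 1 x) (x : X) : ‖f x‖ ≤ 1 := by
  rw [Real.norm_eq_abs, hf]
  by_cases hx : x ∈ A <;> simp [hx]

theorem Measure.IsNonatomic.exists_seq_abs_eq_indicator_tendsto_integral_mul [IsFiniteMeasure μ]
    (hμ : μ.IsNonatomic) {S : ℕ → Set X} (hS : μ.MeasureDense (range S)) {A : Set X}
    (hA : MeasurableSet A) :
    ∃ σ : ℕ → X → ℝ, (∀ k, Measurable (σ k)) ∧ (∀ k x, |σ k x| = A.indicator 1 x) ∧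
      ∀ w, Integrable w μ → Tendsto (fun k => ∫ x, σ k x * w x ∂μ) atTop (𝓝 0) := by
  have hSm (n : ℕ) : MeasurableSet (S n) := hS.measurable _ (mem_range_self n)
  choose G hGA hG _ hGS using fun k => hμ.exists_bisecting_subset k hSm hA
  set σ : ℕ → X → ℝ := fun k x => 2 * (G k).indicator 1 x - A.indicator 1 x
  have hσm (k : ℕ) : Measurable (σ k) :=
    (measurable_const.mul (measurable_one.indicator (hG k))).sub (measurable_one.indicator hA)
  have hσA (k : ℕ) (x : X) : |σ k x| = A.indicator 1 x := by
    by_cases hxG : x ∈ G k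
    · norm_num [σ, hxG, hGA k hxG]
    · by_cases hxA : x ∈ A <;> simp [σ, hxG, hxA]
  have hσS (k n : ℕ) (hnk : n < k) : ∫ x in S n, σ k x ∂μ = 0 := by
    have hreal : 2 * μ.real (G k ∩ S n) = μ.real (A ∩ S n) := by
      simpa [measureReal_def, ENNReal.toReal_mul] using congrArg ENNReal.toReal (hGS k n hnk)
    have hind {s : Set X} (hs : MeasurableSet s) : Integrable (s.indicator 1) (μ.restrict (S n)) :=
      ((integrable_const (1 : ℝ)).indicator hs).restrict
    rw [integral_sub ((hind (hG k)).const_mul 2) (hind hA), integral_const_mul,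
      integral_indicator_one (hG k), integral_indicator_one hA,
      measureReal_restrict_apply (hG k), measureReal_restrict_apply hA, hreal, sub_self]
  refine ⟨σ, hσm, hσA, fun w hw => ?_⟩
  refine tendsto_integral_mul_of_measureDense (fun k => (hσm k).aestronglyMeasurable)
    (fun k => norm_le_one_of_abs_eq_indicator (hσA k)) hS ?_ hw
  rintro _ ⟨n, rfl⟩
  exact tendsto_const_nhds.congr' ((eventually_gt_atTop n).mono fun k hk => (hσS k n hk).symm)

theorem exists_pos_measure_preimage_Icc {f : X → ℝ} {a b : ℝ}
    (h : 0 < μ {x | a < f x ∧ f x < b}) : ∃ c > 0, 0 < μ (f ⁻¹' Icc (a + c) (b - c)) := by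
  by_contra! hzero
  refine h.ne' (measure_mono_null (fun x hx => ?_) (measure_iUnion_null fun n : ℕ =>
    nonpos_iff_eq_zero.1 (hzero (1 / (n + 1)) Nat.one_div_pos_of_nat)))
  obtain ⟨n, hn⟩ := exists_nat_one_div_lt (lt_min (sub_pos.2 hx.1) (sub_pos.2 hx.2))
  exact mem_iUnion.2 ⟨n, by
    constructor <;> linarith [min_le_left (f x - a) (b - f x), min_le_right (f x - a) (b - f x)]⟩

theorem tendsto_integral_add_mul_mul {u w : X → ℝ} {σ : ℕ → X → ℝ} {C : ℝ} (γ : ℝ)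
    (hσ : ∀ k, AEStronglyMeasurable (σ k) μ) (hσC : ∀ k x, ‖σ k x‖ ≤ C)
    (huw : Integrable (fun x => u x * w x) μ) (hw : Integrable w μ)
    (hσw : Tendsto (fun k => ∫ x, σ k x * w x ∂μ) atTop (𝓝 0)) :
    Tendsto (fun k => ∫ x, (u x + γ * σ k x) * w x ∂μ) atTop (𝓝 (∫ x, u x * w x ∂μ)) := by
  have hσw' (k : ℕ) : Integrable (fun x => γ * (σ k x * w x)) μ :=
    (hw.bdd_mul (hσ k) (ae_of_all _ (hσC k))).const_mul γ
  simp_rw [add_mul, mul_assoc]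
  simpa [integral_add huw (hσw' _), integral_const_mul] using
    tendsto_const_nhds.add (hσw.const_mul γ)

theorem integral_abs_add_mul_sub {u σ : X → ℝ} {A : Set X} {γ : ℝ} (hγ : 0 ≤ γ)
    (hA : MeasurableSet A) (hσA : ∀ x, |σ x| = A.indicator 1 x) :
    ∫ x, |u x + γ * σ x - u x| ∂μ = γ * μ.real A := by
  simp_rw [add_sub_cancel_left, abs_mul, abs_of_nonneg hγ, hσA]
  rw [integral_const_mul, integral_indicator_one hA]

end MeasureTheory

section Uad

variable {X : Type*} [MeasurableSpace X] {μ : Measure X} {α β : ℝ}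

theorem integrable_mul_of_mem_Uad {u w : X → ℝ} (hu : u ∈ Uad μ α β) (hw : Integrable w μ) :
    Integrable (fun x => u x * w x) μ :=
  hw.bdd_mul hu.1.aestronglyMeasurable
    (hu.2.mono fun _ hx => (Real.norm_eq_abs _).trans_le (abs_le_max_abs_abs hx.1 hx.2))

theorem add_mul_mem_Uad {u σ : X → ℝ} {A : Set X} {c γ : ℝ} (hu : u ∈ Uad μ α β)
    (huA : ∀ x ∈ A, u x ∈ Icc (α + c) (β - c)) (hσ : Measurable σ)
    (hσA : ∀ x, |σ x| = A.indicator 1 x) (hγ : 0 ≤ γ) (hγc : γ ≤ c) :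
    (fun x => u x + γ * σ x) ∈ Uad μ α β := by
  refine ⟨hu.1.add (hσ.const_mul γ), hu.2.mono fun x hx => ?_⟩
  by_cases hxA : x ∈ A
  · have hσx := hσA x
    rw [indicator_of_mem hxA, Pi.one_apply] at hσx
    obtain ⟨hσ₁, hσ₂⟩ := abs_le.1 hσx.le
    obtain ⟨hu₁, hu₂⟩ := huA x hxA
    constructor <;> nlinarith
  · have hσx : σ x = 0 := abs_eq_zero.1 (by rw [hσA, indicator_of_notMem hxA])
    simpa [hσx] using hx

end Uad

theorem no_growth_for_non_bang_bang_general
    {X : Type*} [MeasurableSpace X] (μ : Measure X) [IsFiniteMeasure μ]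
    (hseparable : ∃ S : ℕ → Set X, (∀ n, MeasurableSet (S n)) ∧
      ∀ A : Set X, MeasurableSet A → ∀ ε : ℝ≥0∞, 0 < ε →
        ∃ n, μ ((A \ S n) ∪ (S n \ A)) < ε)
    (hnonatomic : ∀ A : Set X, MeasurableSet A → 0 < μ A →
      ∃ C, C ⊆ A ∧ MeasurableSet C ∧ 0 < μ C ∧ μ C < μ A)
    (α β : ℝ)
    (J : (X → ℝ) → ℝ)
    (hJcont : ∀ (u : ℕ → X → ℝ) (v : X → ℝ), (∀ k, u k ∈ Uad μ α β) → v ∈ Uad μ α β →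
      (∀ w : X → ℝ, Integrable w μ →
        Tendsto (fun k => ∫ x, u k x * w x ∂μ) atTop (𝓝 (∫ x, v x * w x ∂μ))) →
      Tendsto (fun k => J (u k)) atTop (𝓝 (J v)))
    (ubar : X → ℝ) (hubar : ubar ∈ Uad μ α β)
    (hnbb : 0 < μ {x | α < ubar x ∧ ubar x < β}) :
    ∃ δ₀ > (0:ℝ), ∀ δ : ℝ, 0 < δ → δ ≤ δ₀ → ∀ ε > (0:ℝ),
      ∃ u ∈ Uad μ α β, (∫ x, |u x - ubar x| ∂μ) = δ ∧ J u ≤ J ubar + ε := by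
  obtain ⟨S, hSm, hSapprox⟩ := hseparable
  have hS : μ.MeasureDense (range S) :=
    ⟨by rintro _ ⟨n, rfl⟩; exact hSm n, fun s hs _ ε hε => by
      obtain ⟨n, hn⟩ := hSapprox s hs (.ofReal ε) (ENNReal.ofReal_pos.2 hε)
      exact ⟨S n, mem_range_self n, hn⟩⟩
  obtain ⟨c, hc, hA⟩ := exists_pos_measure_preimage_Icc hnbb
  set A := ubar ⁻¹' Icc (α + c) (β - c)
  have hA_meas : MeasurableSet A := hubar.1 measurableSet_Icc
  have hA_pos : 0 < μ.real A := ENNReal.toReal_pos hA.ne' (measure_ne_top μ A)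
  obtain ⟨σ, hσm, hσA, hσw⟩ :=
    Measure.IsNonatomic.exists_seq_abs_eq_indicator_tendsto_integral_mul hnonatomic hS hA_meas
  refine ⟨c * μ.real A, by positivity, fun δ hδ hδc ε hε => ?_⟩
  set γ := δ / μ.real A
  have hγ : 0 ≤ γ := by positivity
  set u : ℕ → X → ℝ := fun k x => ubar x + γ * σ k x
  have hu (k : ℕ) : u k ∈ Uad μ α β :=
    add_mul_mem_Uad hubar (fun x hx => hx) (hσm k) (hσA k) hγ ((div_le_iff₀ hA_pos).2 hδc)
  have hJu := hJcont u ubar hu hubar fun w hw => tendsto_integral_add_mul_mul γ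
    (fun k => (hσm k).aestronglyMeasurable) (fun k => norm_le_one_of_abs_eq_indicator (hσA k))
    (integrable_mul_of_mem_Uad hubar hw) hw (hσw w hw)
  obtain ⟨k, hk⟩ := (hJu.eventually_lt_const (lt_add_of_pos_right (J ubar) hε)).exists
  refine ⟨u k, hu k, ?_, hk.le⟩
  rw [integral_abs_add_mul_sub hγ hA_meas (hσA k), div_mul_cancel₀ δ hA_pos.ne']

/-- a non-bang-bang local `L¹`-minimizer of a weak* sequentially continuous
functional admits, at every sufficiently small distance `δ`, admissible controls that are
`δ`-far in `L¹` and almost do not increase the objective. -/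
theorem no_growth_for_non_bang_bang
    {X : Type*} [MeasurableSpace X] (μ : Measure X) [IsFiniteMeasure μ]
    (hcomplete : μ.IsComplete)
    (hseparable : ∃ S : ℕ → Set X, (∀ n, MeasurableSet (S n)) ∧
      ∀ A : Set X, MeasurableSet A → ∀ ε : ℝ≥0∞, 0 < ε →
        ∃ n, μ ((A \ S n) ∪ (S n \ A)) < ε)
    (hnonatomic : ∀ A : Set X, MeasurableSet A → 0 < μ A →
      ∃ C, C ⊆ A ∧ MeasurableSet C ∧ 0 < μ C ∧ μ C < μ A)
    (α β : ℝ) (hαβ : α < β)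
    (J : (X → ℝ) → ℝ)
    (hJcont : ∀ (u : ℕ → X → ℝ) (v : X → ℝ), (∀ k, u k ∈ Uad μ α β) → v ∈ Uad μ α β →
      (∀ w : X → ℝ, Integrable w μ →
        Tendsto (fun k => ∫ x, u k x * w x ∂μ) atTop (𝓝 (∫ x, v x * w x ∂μ))) →
      Tendsto (fun k => J (u k)) atTop (𝓝 (J v)))
    (ubar : X → ℝ) (hubar : ubar ∈ Uad μ α β)
    (hmin : ∃ r > (0:ℝ), ∀ u ∈ Uad μ α β, (∫ x, |u x - ubar x| ∂μ) < r → J ubar ≤ J u)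
    (hnbb : 0 < μ {x | α < ubar x ∧ ubar x < β}) :
    ∃ δ₀ > (0:ℝ), ∀ δ : ℝ, 0 < δ → δ ≤ δ₀ → ∀ ε > (0:ℝ),
      ∃ u ∈ Uad μ α β, (∫ x, |u x - ubar x| ∂μ) = δ ∧ J u ≤ J ubar + ε :=
  no_growth_for_non_bang_bang_general μ hseparable hnonatomic α β J hJcont ubar hubar hnbb
end

section
/- Let (X,B,η) be a finite measure space and ū ∈ U_ad = {u ∈ L^∞(X) : α ≤ u ≤ β a.e.}. Suppose ψ̄ ∈ L^1(X) satisfies the first-order condition ∫_X ψ̄ (u − ū) dη ≥ 0 for all u ∈ U_ad, and the structural assumption η({x ∈ X : |ψ̄(x)| ≤ ε}) ≤ K ε for all ε > 0 and some K > 0. Then for all u ∈ U_ad: ∫_X ψ̄ (u − ū) dη ≥ κ ‖u − ū‖_{L^1(X)}² with κ = 1/(4(β − α)K). -/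
open MeasureTheory Filter Topology
open scoped ENNReal

/-!
Testing the first-order condition with the bang-bang control `u* = α` on `{ψ̄ ≥ 0}` and
`u* = β` elsewhere, which minimises `ψ̄ u` pointwise over `[α, β]`, shows that `ψ̄ (u − ū) ≥ 0`
a.e. for every admissible `u`. Hence `ε |u − ū| ≤ ψ̄ (u − ū)` off the set `{|ψ̄| ≤ ε}`, whose
measure is at most `K ε`, and on that set `|u − ū| ≤ β − α`. Integrating,
`ε ‖u − ū‖₁ ≤ ∫ ψ̄ (u − ū) + K (β − α) ε²`, and `ε = ‖u − ū‖₁ / (2 (β − α) K)` gives the claim.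
-/

namespace Uad

variable {X : Type*} [MeasurableSpace X] {μ : Measure X} {α β : ℝ} {u w : X → ℝ}

theorem abs_sub_le (hu : u ∈ Uad μ α β) (hw : w ∈ Uad μ α β) :
    ∀ᵐ x ∂μ, |u x - w x| ≤ β - α := by
  filter_upwards [hu.2, hw.2] with x ⟨hu₁, hu₂⟩ ⟨hw₁, hw₂⟩
  exact abs_le.2 ⟨by linarith, by linarith⟩

theorem integrable_mul_sub {ψ : X → ℝ} (hψ : Integrable ψ μ) (hu : u ∈ Uad μ α β)
    (hw : w ∈ Uad μ α β) : Integrable (fun x => ψ x * (u x - w x)) μ :=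
  hψ.mul_bdd (hu.1.sub hw.1).aestronglyMeasurable (abs_sub_le hu hw)

end Uad

section BangBang

variable {X : Type*} {α β : ℝ}

noncomputable def bangBangControl (ψ : X → ℝ) (α β : ℝ) (x : X) : ℝ :=
  if 0 ≤ ψ x then α else β

theorem mul_bangBangControl_le {ψ : X → ℝ} {x : X} {t : ℝ} (hαt : α ≤ t) (htβ : t ≤ β) :
    ψ x * bangBangControl ψ α β x ≤ ψ x * t := by
  unfold bangBangControl
  split_ifs with h
  · exact mul_le_mul_of_nonneg_left hαt h
  · nlinarith

variable [MeasurableSpace X] {μ : Measure X}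

theorem bangBangControl_mem_Uad {ψ : X → ℝ} (hψ : Measurable ψ) (hαβ : α ≤ β) :
    bangBangControl ψ α β ∈ Uad μ α β := by
  refine ⟨Measurable.ite (measurableSet_le measurable_const hψ) measurable_const
    measurable_const, Eventually.of_forall fun x => ?_⟩
  by_cases h : 0 ≤ ψ x <;> simp [bangBangControl, h, hαβ]

theorem ae_mul_sub_nonneg_of_forall_integral_nonneg (hαβ : α ≤ β) {ψ ubar : X → ℝ}
    (hψ : Integrable ψ μ) (hubar : ubar ∈ Uad μ α β)
    (hFOC : ∀ u ∈ Uad μ α β, 0 ≤ ∫ x, ψ x * (u x - ubar x) ∂μ) {u : X → ℝ}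
    (hu : u ∈ Uad μ α β) : ∀ᵐ x ∂μ, 0 ≤ ψ x * (u x - ubar x) := by
  -- Admissible controls must be measurable, so switch on a measurable version of `ψ`.
  set ustar := bangBangControl (hψ.1.mk ψ) α β
  have hustar : ustar ∈ Uad μ α β :=
    bangBangControl_mem_Uad hψ.1.stronglyMeasurable_mk.measurable hαβ
  have hmin : ∀ᵐ x ∂μ, ∀ t, α ≤ t → t ≤ β → ψ x * ustar x ≤ ψ x * t := by
    filter_upwards [hψ.1.ae_eq_mk] with x hx t hαt htβ
    rw [hx]
    exact mul_bangBangControl_le hαt htβ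
  have hgap_nonneg : 0 ≤ᵐ[μ] fun x => -(ψ x * (ustar x - ubar x)) := by
    filter_upwards [hmin, hubar.2] with x hx ⟨h₁, h₂⟩
    rw [Pi.zero_apply]
    nlinarith [hx _ h₁ h₂]
  have hgap_zero : (fun x => -(ψ x * (ustar x - ubar x))) =ᵐ[μ] 0 := by
    refine (integral_eq_zero_iff_of_nonneg_ae hgap_nonneg
      (Uad.integrable_mul_sub hψ hustar hubar).neg).1 ?_
    have := integral_nonneg_of_ae hgap_nonneg
    rw [integral_neg] at this ⊢
    linarith [hFOC ustar hustar]
  filter_upwards [hmin, hgap_zero, hu.2] with x hx hx₀ ⟨h₁, h₂⟩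
  have : ψ x * (ustar x - ubar x) = 0 := neg_eq_zero.1 hx₀
  nlinarith [hx _ h₁ h₂]

end BangBang

section FiniteMeasure

variable {X : Type*} [MeasurableSpace X] {μ : Measure X} [IsFiniteMeasure μ]

theorem mul_integral_abs_le_integral_mul_add {ψ v : X → ℝ} {C ε : ℝ} (hψ : Integrable ψ μ)
    (hv : AEStronglyMeasurable v μ) (hvC : ∀ᵐ x ∂μ, |v x| ≤ C)
    (hsign : ∀ᵐ x ∂μ, 0 ≤ ψ x * v x) (hε : 0 ≤ ε) :
    ε * ∫ x, |v x| ∂μ ≤ ∫ x, ψ x * v x ∂μ + ε * C * μ.real {x | |ψ x| ≤ ε} := by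
  set S := {x | |ψ x| ≤ ε}
  have hS : NullMeasurableSet S μ :=
    nullMeasurableSet_le hψ.abs.1.aemeasurable aemeasurable_const
  have hψv : Integrable (fun x => ψ x * v x) μ := hψ.mul_bdd hv hvC
  have hind : Integrable (S.indicator fun _ => ε * C) μ := (integrable_const _).indicator₀ hS
  have hpt : ∀ᵐ x ∂μ, ε * |v x| ≤ ψ x * v x + S.indicator (fun _ => ε * C) x := by
    filter_upwards [hvC, hsign] with x hvx hψvx
    by_cases hx : x ∈ S
    · rw [Set.indicator_of_mem hx]
      linarith [mul_le_mul_of_nonneg_left hvx hε]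
    · rw [Set.indicator_of_notMem hx, add_zero, ← abs_of_nonneg hψvx, abs_mul]
      exact mul_le_mul_of_nonneg_right (not_le.1 hx).le (abs_nonneg _)
  calc ε * ∫ x, |v x| ∂μ = ∫ x, ε * |v x| ∂μ := (integral_const_mul _ _).symm
    _ ≤ ∫ x, (ψ x * v x + S.indicator (fun _ => ε * C) x) ∂μ :=
      integral_mono_ae ((Integrable.of_bound hv C hvC).abs.const_mul ε) (hψv.add hind) hpt
    _ = ∫ x, ψ x * v x ∂μ + ε * C * μ.real S := by
      rw [integral_add hψv hind, integral_indicator₀ hS, setIntegral_const, smul_eq_mul,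
        mul_comm]

end FiniteMeasure

/-- the first-order optimality condition together with the structural
assumption on `ψ̄` implies first-order quadratic growth of `J′(ū)(u − ū)` in `L¹`. -/
theorem first_order_quadratic_growth
    {X : Type*} [MeasurableSpace X] (μ : Measure X) [IsFiniteMeasure μ]
    (α β : ℝ) (hαβ : α < β)
    (ubar : X → ℝ) (hubar : ubar ∈ Uad μ α β)
    (ψ : X → ℝ) (hψ : Integrable ψ μ)
    (hFOC : ∀ u ∈ Uad μ α β, 0 ≤ ∫ x, ψ x * (u x - ubar x) ∂μ)
    (K : ℝ) (hK : 0 < K)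
    (hstruct : ∀ ε : ℝ, 0 < ε → μ {x | |ψ x| ≤ ε} ≤ ENNReal.ofReal (K * ε)) :
    ∀ u ∈ Uad μ α β,
      (1 / (4 * (β - α) * K)) * (∫ x, |u x - ubar x| ∂μ) ^ 2
        ≤ ∫ x, ψ x * (u x - ubar x) ∂μ := by
  intro u hu
  have hβα : 0 < β - α := sub_pos.2 hαβ
  have hsign := ae_mul_sub_nonneg_of_forall_integral_nonneg hαβ.le hψ hubar hFOC hu
  set d := ∫ x, |u x - ubar x| ∂μ
  have hd_nonneg : 0 ≤ d := integral_nonneg fun x => abs_nonneg (u x - ubar x)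
  rcases hd_nonneg.eq_or_lt with hd | hd
  · rw [← hd]
    simpa using hFOC u hu
  set ε := d / (2 * (β - α) * K)
  have hε : 0 < ε := by positivity
  have hS : μ.real {x | |ψ x| ≤ ε} ≤ K * ε :=
    ENNReal.toReal_le_of_le_ofReal (by positivity) (hstruct ε hε)
  have key := mul_integral_abs_le_integral_mul_add (v := fun x => u x - ubar x) hψ
    (hu.1.sub hubar.1).aestronglyMeasurable (Uad.abs_sub_le hu hubar) hsign hε.le
  calc 1 / (4 * (β - α) * K) * d ^ 2 = ε * d - ε * (β - α) * (K * ε) := by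
        simp only [ε]
        field_simp
        ring
    _ ≤ ε * d - ε * (β - α) * μ.real {x | |ψ x| ≤ ε} := by gcongr
    _ ≤ ∫ x, ψ x * (u x - ubar x) ∂μ := by linarith
end

section
/- Let (X,B,η) be a finite measure space and ū ∈ U_ad = {u ∈ L^∞(X) : α ≤ u ≤ β a.e.}. Suppose ψ̄ ∈ L^1(X) satisfies ∫_X ψ̄ (u − ū) dη ≥ 0 for all u ∈ U_ad and η({|ψ̄| ≤ ε}) ≤ K ε for all ε > 0 with some K > 0. Then ū is bang-bang, i.e., ū(x) ∈ {α, β} for almost every x ∈ X. -/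
open MeasureTheory Filter Topology
open scoped ENNReal

/-! Compare `ū` with the bang-bang control `u` that equals `α` where `ψ̄ > 0`, `β` where `ψ̄ < 0`
and `ū` elsewhere. The integrand `ψ̄ (u - ū)` is nonpositive, while the first-order condition
makes its integral nonnegative, so it vanishes a.e. The structural assumption with `ε → 0` gives
`η {ψ̄ = 0} = 0`, hence `ū = u ∈ {α, β}` a.e. -/

noncomputable def bangBang (α β s v : ℝ) : ℝ :=
  if 0 < s then α else if s < 0 then β else v

section BangBang

variable {α β s v : ℝ}

lemma bangBang_mem_Icc (hv : v ∈ Set.Icc α β) : bangBang α β s v ∈ Set.Icc α β := by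
  unfold bangBang
  split_ifs
  exacts [⟨le_rfl, hv.1.trans hv.2⟩, ⟨hv.1.trans hv.2, le_rfl⟩, hv]

lemma mul_bangBang_sub_nonpos (hv : v ∈ Set.Icc α β) : s * (bangBang α β s v - v) ≤ 0 := by
  unfold bangBang
  split_ifs with hpos hneg
  · exact mul_nonpos_of_nonneg_of_nonpos hpos.le (by linarith [hv.1])
  · exact mul_nonpos_of_nonpos_of_nonneg hneg.le (by linarith [hv.2])
  · simp

lemma eq_or_eq_of_bangBang_eq (hs : s ≠ 0) (h : bangBang α β s v = v) : v = α ∨ v = β := by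
  unfold bangBang at h
  split_ifs at h with hpos hneg
  · exact Or.inl h.symm
  · exact Or.inr h.symm
  · exact absurd (le_antisymm (not_lt.1 hpos) (not_lt.1 hneg)) hs

end BangBang

section Uad

variable {X : Type*} [MeasurableSpace X] {μ : Measure X} {α β : ℝ}

lemma ae_mem_Icc_of_mem_Uad {u : X → ℝ} (hu : u ∈ Uad μ α β) : ∀ᵐ x ∂μ, u x ∈ Set.Icc α β :=
  hu.2

lemma bangBang_mem_Uad {p u : X → ℝ} (hp : Measurable p) (hu : u ∈ Uad μ α β) :
    (fun x ↦ bangBang α β (p x) (u x)) ∈ Uad μ α β := by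
  refine ⟨?_, ?_⟩
  · exact Measurable.ite (measurableSet_lt measurable_const hp) measurable_const <|
      Measurable.ite (measurableSet_lt hp measurable_const) measurable_const hu.1
  · filter_upwards [ae_mem_Icc_of_mem_Uad hu] with x hx using bangBang_mem_Icc hx

lemma integrable_mul_sub_of_mem_Uad {ψ u v : X → ℝ} (hψ : Integrable ψ μ)
    (hu : u ∈ Uad μ α β) (hv : v ∈ Uad μ α β) :
    Integrable (fun x ↦ ψ x * (u x - v x)) μ := by
  refine (hψ.abs.mul_const (β - α)).mono'
    (hψ.aestronglyMeasurable.mul (hu.1.sub hv.1).aestronglyMeasurable) ?_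
  filter_upwards [ae_mem_Icc_of_mem_Uad hu, ae_mem_Icc_of_mem_Uad hv] with x hux hvx
  rw [Real.norm_eq_abs, abs_mul]
  gcongr
  rw [abs_sub_le_iff]
  constructor <;> linarith [hux.1, hux.2, hvx.1, hvx.2]

end Uad

lemma ae_eq_zero_of_nonpos_of_integral_nonneg {X : Type*} [MeasurableSpace X] {μ : Measure X}
    {f : X → ℝ} (hfi : Integrable f μ) (hf : f ≤ᵐ[μ] 0) (hint : 0 ≤ ∫ x, f x ∂μ) :
    f =ᵐ[μ] 0 := by
  have hneg : 0 ≤ᵐ[μ] -f := by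
    filter_upwards [hf] with x hx using neg_nonneg.2 hx
  have hzero : ∫ x, (-f) x ∂μ = 0 := by
    simp only [Pi.neg_apply, integral_neg]
    linarith [integral_nonpos_of_ae hf]
  filter_upwards [(integral_eq_zero_iff_of_nonneg_ae hneg hfi.neg).1 hzero] with x hx
  simpa using hx

lemma ENNReal.eq_zero_of_forall_pos_le_ofReal_mul {a : ℝ≥0∞} {K : ℝ}
    (h : ∀ ε : ℝ, 0 < ε → a ≤ ENNReal.ofReal (K * ε)) : a = 0 := by
  have htend : Tendsto (fun ε : ℝ ↦ ENNReal.ofReal (K * ε)) (𝓝[>] 0) (𝓝 0) := by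
    have : Tendsto (fun ε : ℝ ↦ ENNReal.ofReal (K * ε)) (𝓝 0) (𝓝 (ENNReal.ofReal (K * 0))) :=
      (ENNReal.continuous_ofReal.comp (continuous_const_mul K)).tendsto 0
    simpa using this.mono_left nhdsWithin_le_nhds
  exact nonpos_iff_eq_zero.1 <|
    ge_of_tendsto htend (eventually_nhdsWithin_of_forall fun ε hε ↦ h ε hε)

lemma ae_ne_zero_of_measure_abs_le_le {X : Type*} [MeasurableSpace X] {μ : Measure X}
    {ψ : X → ℝ} {K : ℝ} (h : ∀ ε : ℝ, 0 < ε → μ {x | |ψ x| ≤ ε} ≤ ENNReal.ofReal (K * ε)) :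
    ∀ᵐ x ∂μ, ψ x ≠ 0 := by
  have hnull : μ {x | ψ x = 0} = 0 := by
    refine ENNReal.eq_zero_of_forall_pos_le_ofReal_mul fun ε hε ↦ (measure_mono ?_).trans (h ε hε)
    intro x (hx : ψ x = 0)
    simpa [hx] using hε.le
  simpa [ae_iff] using hnull

theorem bang_bang_of_structural_assumption_general
    {X : Type*} [MeasurableSpace X] (μ : Measure X)
    (α β : ℝ)
    (ubar : X → ℝ) (hubar : ubar ∈ Uad μ α β)
    (ψ : X → ℝ) (hψ : Integrable ψ μ)
    (hFOC : ∀ u ∈ Uad μ α β, 0 ≤ ∫ x, ψ x * (u x - ubar x) ∂μ)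
    (K : ℝ)
    (hstruct : ∀ ε : ℝ, 0 < ε → μ {x | |ψ x| ≤ ε} ≤ ENNReal.ofReal (K * ε)) :
    ∀ᵐ x ∂μ, ubar x = α ∨ ubar x = β := by
  set u : X → ℝ := fun x ↦ bangBang α β (hψ.aestronglyMeasurable.mk ψ x) (ubar x)
  have hu : u ∈ Uad μ α β :=
    bangBang_mem_Uad hψ.aestronglyMeasurable.stronglyMeasurable_mk.measurable hubar
  have hnonpos : (fun x ↦ ψ x * (u x - ubar x)) ≤ᵐ[μ] 0 := by
    filter_upwards [ae_mem_Icc_of_mem_Uad hubar, hψ.aestronglyMeasurable.ae_eq_mk]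
      with x hx hψx
    simpa [u, ← hψx] using mul_bangBang_sub_nonpos hx
  have hzero : (fun x ↦ ψ x * (u x - ubar x)) =ᵐ[μ] 0 :=
    ae_eq_zero_of_nonpos_of_integral_nonneg (integrable_mul_sub_of_mem_Uad hψ hu hubar)
      hnonpos (hFOC u hu)
  filter_upwards [hzero, hψ.aestronglyMeasurable.ae_eq_mk, ae_ne_zero_of_measure_abs_le_le hstruct]
    with x hx hψx hne
  have hux : u x = ubar x := sub_eq_zero.1 <| (mul_eq_zero.1 hx).resolve_left hne
  exact eq_or_eq_of_bangBang_eq (hψx ▸ hne) hux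

/-- the first-order optimality condition together with the structural
assumption on `ψ̄` implies that `ū` is bang-bang. -/
theorem bang_bang_of_structural_assumption
    {X : Type*} [MeasurableSpace X] (μ : Measure X) [IsFiniteMeasure μ]
    (α β : ℝ) (hαβ : α < β)
    (ubar : X → ℝ) (hubar : ubar ∈ Uad μ α β)
    (ψ : X → ℝ) (hψ : Integrable ψ μ)
    (hFOC : ∀ u ∈ Uad μ α β, 0 ≤ ∫ x, ψ x * (u x - ubar x) ∂μ)
    (K : ℝ) (hK : 0 < K)
    (hstruct : ∀ ε : ℝ, 0 < ε → μ {x | |ψ x| ≤ ε} ≤ ENNReal.ofReal (K * ε)) :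
    ∀ᵐ x ∂μ, ubar x = α ∨ ubar x = β :=
  bang_bang_of_structural_assumption_general μ α β ubar hubar ψ hψ hFOC K hstruct
end

section
/- Discretization error for projection of a bang-bang control: Let ω ⊂ ℝⁿ be a bounded measurable set, ψ̄ : ω̄ → ℝ Lipschitz continuous with constant L̄, satisfying the measure condition |{x ∈ ω : |ψ̄(x)| ≤ ε}| ≤ K ε for all ε > 0. Let ū ∈ L^∞(ω) be bang-bang with ū(x) = α if ψ̄(x) > 0 and ū(x) = β if ψ̄(x) < 0. Let T_h be a partition of a subset ω_h ⊆ ω into measurable cells of diameter at most h, and let u_h be the cellwise-average projection of ū. Then ‖u_h − ū‖_{L^1(ω_h)} ≤ (β − α) K L̄ h. -/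
open MeasureTheory Filter Topology Set Metric
open scoped ENNReal NNReal

/-!
A cell on which `ψ̄` keeps a strict sign carries a constant control, so the projection is exact
there. On any other cell `ψ̄` takes a value `≤ 0` and a value `≥ 0`, so by the Lipschitz bound
`|ψ̄| ≤ L̄ h` on the whole cell, which therefore lies in the band `{x ∈ ω | |ψ̄ x| ≤ L̄ h}`; there
the error is at most `β - α`, since both `ū` and its cell average lie in `[α, β]`. Integrating
`|u_h - ū| ≤ (β - α) 𝟙_band` and applying the measure condition with `ε = L̄ h` gives the bound.
-/

theorem ContinuousOn.measurableSet_inter_preimage {X Y : Type*} [TopologicalSpace X]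
    [MeasurableSpace X] [OpensMeasurableSpace X] [TopologicalSpace Y] {f : X → Y} {s : Set X}
    {t : Set Y} (hf : ContinuousOn f s) (hs : MeasurableSet s) (ht : IsClosed t) :
    MeasurableSet (s ∩ f ⁻¹' t) := by
  obtain ⟨u, hu, hfu⟩ := continuousOn_iff_isClosed.1 hf t ht
  rw [inter_comm, hfu]
  exact hu.measurableSet.inter hs

theorem LipschitzOnWith.dist_le_mul_of_diam_le {X : Type*} [PseudoMetricSpace X] {ψ : X → ℝ}
    {L : ℝ≥0} {s : Set X} {h : ℝ} (hψ : LipschitzOnWith L ψ s) (hs : Bornology.IsBounded s)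
    (hdiam : diam s ≤ h) {x y : X} (hx : x ∈ s) (hy : y ∈ s) :
    dist (ψ x) (ψ y) ≤ L * h :=
  (hψ.dist_le_mul x hx y hy).trans <|
    mul_le_mul_of_nonneg_left ((dist_le_diam_of_mem hs hx hy).trans hdiam) L.coe_nonneg

theorem LipschitzOnWith.abs_le_of_diam_le {X : Type*} [PseudoMetricSpace X] {ψ : X → ℝ}
    {L : ℝ≥0} {s : Set X} {h : ℝ} (hψ : LipschitzOnWith L ψ s) (hs : Bornology.IsBounded s)
    (hdiam : diam s ≤ h) {x₀ x₁ : X} (hx₀ : x₀ ∈ s) (hψx₀ : ψ x₀ ≤ 0) (hx₁ : x₁ ∈ s)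
    (hψx₁ : 0 ≤ ψ x₁) {z : X} (hz : z ∈ s) : |ψ z| ≤ L * h := by
  have h₀ := abs_le.1 (Real.dist_eq _ _ ▸ hψ.dist_le_mul_of_diam_le hs hdiam hz hx₀)
  have h₁ := abs_le.1 (Real.dist_eq _ _ ▸ hψ.dist_le_mul_of_diam_le hs hdiam hz hx₁)
  rw [abs_le]
  constructor <;> linarith [h₀.2, h₁.1]

theorem subset_abs_le_or_eq_const_of_bangBang {X : Type*} [PseudoMetricSpace X] {ψ u : X → ℝ}
    {L : ℝ≥0} {s : Set X} {h a b : ℝ} (hψ : LipschitzOnWith L ψ s)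
    (hs : Bornology.IsBounded s) (hdiam : diam s ≤ h)
    (hu : ∀ x ∈ s, (0 < ψ x → u x = a) ∧ (ψ x < 0 → u x = b)) :
    s ⊆ {x | |ψ x| ≤ L * h} ∨ ∃ c, ∀ x ∈ s, u x = c := by
  by_cases hpos : ∀ x ∈ s, 0 < ψ x
  · exact Or.inr ⟨a, fun x hx => (hu x hx).1 (hpos x hx)⟩
  by_cases hneg : ∀ x ∈ s, ψ x < 0
  · exact Or.inr ⟨b, fun x hx => (hu x hx).2 (hneg x hx)⟩
  push Not at hpos hneg
  obtain ⟨x₀, hx₀, hψx₀⟩ := hpos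
  obtain ⟨x₁, hx₁, hψx₁⟩ := hneg
  exact Or.inl fun z hz => hψ.abs_le_of_diam_le hs hdiam hx₀ hψx₀ hx₁ hψx₁ hz

theorem abs_setAverage_sub_le_indicator {X : Type*} [MeasurableSpace X] {μ : Measure X}
    {s t : Set X} {f : X → ℝ} {a b : ℝ} (hs : MeasurableSet s) (hμ₀ : μ s ≠ 0) (hμ : μ s ≠ ∞)
    (hf : AEStronglyMeasurable f (μ.restrict s)) (hfab : ∀ x ∈ s, f x ∈ Icc a b)
    (hst : s ⊆ t ∨ ∃ c, ∀ x ∈ s, f x = c) {x : X} (hx : x ∈ s) :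
    |(⨍ y in s, f y ∂μ) - f x| ≤ t.indicator (fun _ => b - a) x := by
  rcases hst with hst | ⟨c, hc⟩
  · have hfi : IntegrableOn f s μ := .of_bound hμ.lt_top hf (max |a| |b|)
      (ae_restrict_of_forall_mem hs fun y hy => abs_le_max_abs_abs (hfab y hy).1 (hfab y hy).2)
    have havg : (⨍ y in s, f y ∂μ) ∈ Icc a b := (convex_Icc a b).set_average_mem isClosed_Icc
      hμ₀ hμ (ae_restrict_of_forall_mem hs hfab) hfi
    rw [indicator_of_mem (hst hx), ← Real.dist_eq]
    exact Real.dist_le_of_mem_Icc havg (hfab x hx)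
  · have havg : (⨍ y in s, f y ∂μ) = c := by
      rw [setAverage_congr_fun hs (Eventually.of_forall hc), setAverage_const hμ₀ hμ]
    rw [havg, hc x hx, sub_self, abs_zero]
    exact indicator_nonneg (fun _ _ => sub_nonneg.2 ((hfab x hx).1.trans (hfab x hx).2)) x

theorem setIntegral_le_measureReal_mul_of_le_indicator {X : Type*} [MeasurableSpace X]
    {μ : Measure X} {s t : Set X} {f : X → ℝ} {c : ℝ} (hs : MeasurableSet s)
    (ht : MeasurableSet t) (hμt : μ t ≠ ∞) (hf₀ : ∀ x ∈ s, 0 ≤ f x) (hc : 0 ≤ c)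
    (hf : ∀ x ∈ s, f x ≤ t.indicator (fun _ => c) x) :
    ∫ x in s, f x ∂μ ≤ μ.real t * c := by
  have hint : Integrable (t.indicator fun _ => c) μ := (integrableOn_const hμt).integrable_indicator ht
  calc ∫ x in s, f x ∂μ ≤ ∫ x in s, t.indicator (fun _ => c) x ∂μ :=
        integral_mono_of_nonneg (ae_restrict_of_forall_mem hs hf₀) hint.integrableOn
          (ae_restrict_of_forall_mem hs hf)
    _ ≤ ∫ x, t.indicator (fun _ => c) x ∂μ :=
        setIntegral_le_integral hint (Eventually.of_forall (indicator_nonneg fun _ _ => hc))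
    _ = μ.real t * c := by rw [integral_indicator_const c ht, smul_eq_mul]

theorem measure_sep_abs_le_of_forall_pos {X : Type*} [MeasurableSpace X] {μ : Measure X}
    {s : Set X} {ψ : X → ℝ} {K ε : ℝ}
    (hμ : ∀ δ : ℝ, 0 < δ → μ {x ∈ s | |ψ x| ≤ δ} ≤ ENNReal.ofReal (K * δ)) (hε : 0 ≤ ε) :
    μ {x ∈ s | |ψ x| ≤ ε} ≤ ENNReal.ofReal (K * ε) := by
  have hlim : Tendsto (fun δ => ENNReal.ofReal (K * δ)) (𝓝[>] ε) (𝓝 (ENNReal.ofReal (K * ε))) :=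
    ((ENNReal.continuous_ofReal.comp (continuous_const_mul K)).tendsto ε).mono_left
      nhdsWithin_le_nhds
  refine ge_of_tendsto hlim (eventually_nhdsWithin_of_forall fun δ (hδ : ε < δ) => ?_)
  have hsub : {x ∈ s | |ψ x| ≤ ε} ⊆ {x ∈ s | |ψ x| ≤ δ} := fun x hx => ⟨hx.1, hx.2.trans hδ.le⟩
  exact (measure_mono hsub).trans (hμ δ (hε.trans_lt hδ))

theorem projection_error_bang_bang_general
    (n : ℕ) (ω : Set (EuclideanSpace ℝ (Fin n)))
    (hωmeas : MeasurableSet ω) (hωbdd : Bornology.IsBounded ω)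
    (ψ : EuclideanSpace ℝ (Fin n) → ℝ) (Lb : ℝ≥0)
    (hLip : LipschitzOnWith Lb ψ (closure ω))
    (K : ℝ) (hK : 0 < K)
    (hmeasure : ∀ ε : ℝ, 0 < ε →
      volume {x ∈ ω | |ψ x| ≤ ε} ≤ ENNReal.ofReal (K * ε))
    (α β : ℝ) (hαβ : α ≤ β)
    (ubar : EuclideanSpace ℝ (Fin n) → ℝ) (hmeas : Measurable ubar)
    (hbb : ∀ x ∈ ω, (0 < ψ x → ubar x = α) ∧ (ψ x < 0 → ubar x = β) ∧
      (ubar x = α ∨ ubar x = β))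
    -- the partition T of ω_h = ⋃ i, T i ⊆ ω into cells of diameter ≤ h
    (ι : Type*) [Countable ι] (T : ι → Set (EuclideanSpace ℝ (Fin n)))
    (hTmeas : ∀ i, MeasurableSet (T i))
    (hTsub : ∀ i, T i ⊆ ω)
    (hTpos : ∀ i, 0 < volume (T i))
    (h : ℝ) (hh : 0 ≤ h) (hdiam : ∀ i, Metric.diam (T i) ≤ h)
    -- u_h is the cellwise average of ū
    (uh : EuclideanSpace ℝ (Fin n) → ℝ)
    (huh : ∀ i, ∀ x ∈ T i, uh x = (∫ y in T i, ubar y) / (volume (T i)).toReal) :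
    (∫ x in ⋃ i, T i, |uh x - ubar x|) ≤ (β - α) * K * (Lb : ℝ) * h := by
  have hψ : LipschitzOnWith Lb ψ ω := hLip.mono subset_closure
  set B := {x ∈ ω | |ψ x| ≤ Lb * h}
  have hB : MeasurableSet B :=
    hψ.continuousOn.abs.measurableSet_inter_preimage hωmeas (isClosed_Iic (a := (Lb * h : ℝ)))
  have hBvol : volume.real B ≤ K * (Lb * h) := ENNReal.toReal_le_of_le_ofReal (by positivity)
    (measure_sep_abs_le_of_forall_pos hmeasure (by positivity))
  have hubar : ∀ x ∈ ω, ubar x ∈ Icc α β := fun x hx => by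
    rcases (hbb x hx).2.2 with hα | hβ
    · rw [hα]; exact left_mem_Icc.2 hαβ
    · rw [hβ]; exact right_mem_Icc.2 hαβ
  have hcell : ∀ i, ∀ x ∈ T i, |uh x - ubar x| ≤ B.indicator (fun _ => β - α) x := by
    intro i x hx
    have hTω := hTsub i
    have hTbdd := hωbdd.subset hTω
    rw [huh i x hx, ← inv_mul_eq_div, ← smul_eq_mul, ← measureReal_def, ← setAverage_eq]
    refine abs_setAverage_sub_le_indicator (hTmeas i) (hTpos i).ne' hTbdd.measure_lt_top.ne
      hmeas.aestronglyMeasurable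
      (fun y hy => hubar y (hTω hy))
      ((subset_abs_le_or_eq_const_of_bangBang (hψ.mono hTω) hTbdd (hdiam i)
        fun y hy => ⟨(hbb y (hTω hy)).1, (hbb y (hTω hy)).2.1⟩).imp_left
          fun hband y hy => show y ∈ B from ⟨hTω hy, hband hy⟩) hx
  calc (∫ x in ⋃ i, T i, |uh x - ubar x|) ≤ volume.real B * (β - α) := by
        refine setIntegral_le_measureReal_mul_of_le_indicator (.iUnion hTmeas) hB
          (hωbdd.subset (sep_subset ω _)).measure_lt_top.ne (fun _ _ => abs_nonneg _)
          (sub_nonneg.2 hαβ) fun x hx => ?_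
        obtain ⟨i, hxi⟩ := mem_iUnion.1 hx
        exact hcell i x hxi
    _ ≤ K * (Lb * h) * (β - α) := mul_le_mul_of_nonneg_right hBvol (sub_nonneg.2 hαβ)
    _ = (β - α) * K * (Lb : ℝ) * h := by ring

/-- discretization error for the projection of a bang-bang control:
for a bang-bang control `ū` determined by a Lipschitz switching function `ψ̄` satisfying the
structural measure condition, the cellwise-average projection `u_h` on a partition with
cells of diameter at most `h` satisfies `‖u_h − ū‖_{L¹(ω_h)} ≤ (β−α) K L̄ h`. -/
theorem projection_error_bang_bang
    (n : ℕ) (ω : Set (EuclideanSpace ℝ (Fin n)))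
    (hωmeas : MeasurableSet ω) (hωbdd : Bornology.IsBounded ω)
    (ψ : EuclideanSpace ℝ (Fin n) → ℝ) (Lb : ℝ≥0)
    (hLip : LipschitzOnWith Lb ψ (closure ω))
    (K : ℝ) (hK : 0 < K)
    (hmeasure : ∀ ε : ℝ, 0 < ε →
      volume {x ∈ ω | |ψ x| ≤ ε} ≤ ENNReal.ofReal (K * ε))
    (α β : ℝ) (hαβ : α ≤ β)
    (ubar : EuclideanSpace ℝ (Fin n) → ℝ) (hmeas : Measurable ubar)
    (hbb : ∀ x ∈ ω, (0 < ψ x → ubar x = α) ∧ (ψ x < 0 → ubar x = β) ∧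
      (ubar x = α ∨ ubar x = β))
    -- the partition T of ω_h = ⋃ i, T i ⊆ ω into cells of diameter ≤ h
    (ι : Type*) [Countable ι] (T : ι → Set (EuclideanSpace ℝ (Fin n)))
    (hTmeas : ∀ i, MeasurableSet (T i))
    (hTdisj : Pairwise (Function.onFun Disjoint T))
    (hTsub : ∀ i, T i ⊆ ω)
    (hTpos : ∀ i, 0 < volume (T i))
    (h : ℝ) (hh : 0 ≤ h) (hdiam : ∀ i, Metric.diam (T i) ≤ h)
    -- u_h is the cellwise average of ū
    (uh : EuclideanSpace ℝ (Fin n) → ℝ)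
    (huh : ∀ i, ∀ x ∈ T i, uh x = (∫ y in T i, ubar y) / (volume (T i)).toReal) :
    (∫ x in ⋃ i, T i, |uh x - ubar x|) ≤ (β - α) * K * (Lb : ℝ) * h :=
  projection_error_bang_bang_general n ω hωmeas hωbdd ψ Lb hLip K hK hmeasure α β hαβ ubar hmeas hbb
    ι T hTmeas hTsub hTpos h hh hdiam uh huh
end

section
/- L^1 convergence of discretizations of bang-bang controls from weak* convergence: Let (X,B,η) be a finite measure space, ū ∈ U_ad bang-bang (ū ∈ {α,β} a.e.), X_h ⊆ X with η(X\X_h) → 0, and ū_h ∈ L^∞(X_h) with α ≤ ū_h ≤ β a.e. If ū_h ⇀* ū in L^∞(X) in the sense that ∫_{X_h} v ū_h dη → ∫_X v ū dη for all v ∈ L^1(X), then ‖ū_h − ū‖_{L^1(X_h)} → 0. -/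
open MeasureTheory Filter Topology
open scoped ENNReal

/-!
Where a bang-bang control sits at the lower bound `α`, every admissible value lies above it, and
where it sits at `β`, below it. So `|ū_h - ū| = w (ū_h - ū)` for the sign `w = ±1` of `{ū = α}`
versus `{ū = β}`, and `‖ū_h - ū‖_{L¹(X_h)} = ∫_{X_h} w ū_h - ∫_{X_h} w ū`. Testing the weak*
convergence with `w ∈ L¹` sends the first term to `∫_X w ū`, and the second converges to the same
limit because `η(X \ X_h) → 0`.
-/

theorem abs_sub_eq_ite_mul_sub {α β b t : ℝ} (hb : b = α ∨ b = β) (hαt : α ≤ t) (htβ : t ≤ β) :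
    |t - b| = (if b = α then 1 else -1) * (t - b) := by
  by_cases hbα : b = α
  · rw [if_pos hbα, one_mul, abs_of_nonneg (by linarith)]
  · rw [if_neg hbα, hb.resolve_left hbα, abs_of_nonpos (by linarith)]
    ring

section Integral

variable {Ω : Type*} [MeasurableSpace Ω] {μ : Measure Ω}

/-- An inequality, not an equation: if `f` is not integrable, `∫ f` and `∫ g` are both junk `0`. -/
theorem integral_le_abs_integral_sub_integral {f g h : Ω → ℝ} (hh : Integrable h μ)
    (hg : g =ᵐ[μ] f - h) : ∫ x, g x ∂μ ≤ |∫ x, f x ∂μ - ∫ x, h x ∂μ| := by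
  by_cases hf : Integrable f μ
  · rw [integral_congr_ae hg, Pi.sub_def, integral_sub hf hh]
    exact le_abs_self _
  · have hg_int : ¬ Integrable g μ := fun hg_int =>
      hf ((hg_int.add hh).congr (hg.mono fun x hx => by simp [hx]))
    rw [integral_undef hg_int]
    exact abs_nonneg _

theorem tendsto_setIntegral_of_tendsto_measure_compl {E ι : Type*} [NormedAddCommGroup E]
    [NormedSpace ℝ E] {l : Filter ι} {f : Ω → E} (hf : Integrable f μ) {s : ι → Set Ω} (hs : ∀ i, MeasurableSet (s i))
    (hsc : Tendsto (fun i => μ (s i)ᶜ) l (𝓝 0)) :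
    Tendsto (fun i => ∫ x in s i, f x ∂μ) l (𝓝 (∫ x, f x ∂μ)) := by
  have hsplit : ∀ i, ∫ x in s i, f x ∂μ = ∫ x, f x ∂μ - ∫ x in (s i)ᶜ, f x ∂μ := fun i => by
    rw [← integral_add_compl (hs i) hf, add_sub_cancel_right]
  simp only [hsplit]
  simpa using
    tendsto_const_nhds.sub (hf.tendsto_setIntegral_nhds_zero (s := fun i => (s i)ᶜ) hsc)

end Integral

theorem l1_convergence_of_bang_bang_approx_general
    {X : Type*} [MeasurableSpace X] (μ : Measure X) [IsFiniteMeasure μ]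
    (α β : ℝ)
    (ubar : X → ℝ) (hubar : ubar ∈ Uad μ α β)
    (hbb : ∀ᵐ x ∂μ, ubar x = α ∨ ubar x = β)
    (A : ℕ → Set X) (hAmeas : ∀ n, MeasurableSet (A n))
    (hA : Tendsto (fun n => μ (A n)ᶜ) atTop (𝓝 0))
    (un : ℕ → X → ℝ)
    (hun : ∀ n, ∀ᵐ x ∂(μ.restrict (A n)), α ≤ un n x ∧ un n x ≤ β)
    (hweak : ∀ w : X → ℝ, Integrable w μ →
      Tendsto (fun n => ∫ x in A n, w x * un n x ∂μ) atTop (𝓝 (∫ x, w x * ubar x ∂μ))) :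
    Tendsto (fun n => ∫ x in A n, |un n x - ubar x| ∂μ) atTop (𝓝 0) := by
  obtain ⟨hmeas, hbound⟩ := hubar
  set w : X → ℝ := fun x => if ubar x = α then 1 else -1
  have hw_meas : Measurable w :=
    Measurable.ite (hmeas (measurableSet_singleton α)) measurable_const measurable_const
  have hw_bound : ∀ᵐ x ∂μ, ‖w x‖ ≤ 1 :=
    .of_forall fun x => by by_cases h : ubar x = α <;> simp [w, h]
  have hw_int : Integrable w μ := .of_bound hw_meas.aestronglyMeasurable 1 hw_bound
  have hwu_int : Integrable (fun x => w x * ubar x) μ :=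
    (Integrable.of_mem_Icc α β hmeas.aemeasurable hbound).bdd_mul
      hw_meas.aestronglyMeasurable hw_bound
  have hnorm_le : ∀ n, ∫ x in A n, |un n x - ubar x| ∂μ ≤
      |∫ x in A n, w x * un n x ∂μ - ∫ x in A n, w x * ubar x ∂μ| := fun n =>
    integral_le_abs_integral_sub_integral hwu_int.restrict <| by
      filter_upwards [ae_restrict_of_ae hbb, hun n] with x hbx hux
      simp only [Pi.sub_apply, abs_sub_eq_ite_mul_sub hbx hux.1 hux.2, w, mul_sub]
  have hgap := (hweak w hw_int).sub
    (tendsto_setIntegral_of_tendsto_measure_compl hwu_int hAmeas hA)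
  rw [sub_self] at hgap
  exact squeeze_zero (fun n => integral_nonneg fun x => abs_nonneg _) hnorm_le
    (by simpa using hgap.abs)

/-- for a bang-bang control `ū`, weak* convergence (across the varying domains
`X_h`) of admissible discrete controls `ū_h` to `ū` implies `‖ū_h − ū‖_{L¹(X_h)} → 0`. -/
theorem l1_convergence_of_bang_bang_approx
    {X : Type*} [MeasurableSpace X] (μ : Measure X) [IsFiniteMeasure μ]
    (α β : ℝ) (hαβ : α < β)
    (ubar : X → ℝ) (hubar : ubar ∈ Uad μ α β)
    (hbb : ∀ᵐ x ∂μ, ubar x = α ∨ ubar x = β)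
    (A : ℕ → Set X) (hAmeas : ∀ n, MeasurableSet (A n))
    (hA : Tendsto (fun n => μ (A n)ᶜ) atTop (𝓝 0))
    (un : ℕ → X → ℝ)
    (hun : ∀ n, ∀ᵐ x ∂(μ.restrict (A n)), α ≤ un n x ∧ un n x ≤ β)
    (hweak : ∀ w : X → ℝ, Integrable w μ →
      Tendsto (fun n => ∫ x in A n, w x * un n x ∂μ) atTop (𝓝 (∫ x, w x * ubar x ∂μ))) :
    Tendsto (fun n => ∫ x in A n, |un n x - ubar x| ∂μ) atTop (𝓝 0) :=
  l1_convergence_of_bang_bang_approx_general μ α β ubar hubar hbb A hAmeas hA un hun hweak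
end
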